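/- Let Y be a random vector in ℝ^d with ‖Y‖ ≤ 1/λ almost surely (λ > 0), m̃ = E(Y), μ > 0, β > 0. Then E[exp(μλ⟨θ, Y - m̃⟩ + (μ²λ²/(2β))‖Y - m̃‖²)] ≤ 1 + g₂(2μ)·(μ²λ²/2)·E(⟨θ, Y - m̃⟩²) + exp(2μ)·g₁(2μ²/β)·(μ²λ²/(2β))·E(‖Y - m̃‖²), for any unit vector θ. -/

import Mathlib

/-!
Put `X = μλ⟪θ, Y - m̃⟫ ≤ 2μ` and `V = (μ²λ²/(2β))‖Y - m̃‖² ∈ [0, 2μ²/β]`.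
Taylor's formula with integral remainder gives `g₂ t = 2 ∫₀¹ (1 - s) e^{ts} ds` and
`g₁ t = ∫₀¹ e^{ts} ds`, so both are monotone, whence `eˣ ≤ 1 + x + g₂(c) x²/2` for `x ≤ c` and
`eᵛ ≤ 1 + g₁(w) v` for `0 ≤ v ≤ w`. Therefore
`e^{x+v} = eˣ + eˣ (eᵛ - 1) ≤ 1 + x + g₂(c) x²/2 + e^c g₁(w) v`,
and taking expectations kills the linear term because `X` is centred.
-/

open MeasureTheory ProbabilityTheory
open scoped RealInnerProductSpace

noncomputable def g1 (t : ℝ) : ℝ := if t = 0 then 1 else (Real.exp t - 1) / t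

noncomputable def g2 (t : ℝ) : ℝ := if t = 0 then 1 else 2 * (Real.exp t - 1 - t) / t ^ 2

open Real

lemma g1_eq_integral (a : ℝ) : g1 a = ∫ s in (0 : ℝ)..1, exp (a * s) := by
  rcases eq_or_ne a 0 with rfl | ha
  · simp [g1]
  · rw [intervalIntegral.integral_comp_mul_left exp ha, integral_exp, g1, if_neg ha]
    simp [div_eq_inv_mul]

lemma sq_mul_integral_one_sub_mul_exp (a : ℝ) :
    a ^ 2 * ∫ s in (0 : ℝ)..1, (1 - s) * exp (a * s) = exp a - 1 - a := by
  rcases eq_or_ne a 0 with rfl | ha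
  · simp
  have hderiv : ∀ s ∈ Set.uIcc (0 : ℝ) 1,
      HasDerivAt (fun s => ((1 - s) / a + 1 / a ^ 2) * exp (a * s))
        ((1 - s) * exp (a * s)) s := by
    intro s _
    have hexp : HasDerivAt (fun s => exp (a * s)) (exp (a * s) * a) s := by
      simpa only [mul_one] using ((hasDerivAt_id' s).const_mul a).exp
    refine ((((hasDerivAt_id' s).const_sub 1).div_const a).add_const _).mul hexp
      |>.congr_deriv ?_
    field_simp
    ring
  rw [intervalIntegral.integral_eq_sub_of_hasDerivAt hderiv
    (Continuous.intervalIntegrable (by fun_prop) _ _)]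
  field_simp
  simp only [mul_zero, exp_zero]
  ring

lemma g2_eq_integral (a : ℝ) : g2 a = 2 * ∫ s in (0 : ℝ)..1, (1 - s) * exp (a * s) := by
  rcases eq_or_ne a 0 with rfl | ha
  · norm_num [g2, intervalIntegral.integral_sub intervalIntegrable_const
      intervalIntegral.intervalIntegrable_id]
  · rw [g2, if_neg ha, ← sq_mul_integral_one_sub_mul_exp]
    field_simp

lemma monotone_g1 : Monotone g1 := by
  intro a b hab
  rw [g1_eq_integral, g1_eq_integral]
  refine intervalIntegral.integral_mono_on zero_le_one
    (Continuous.intervalIntegrable (by fun_prop) _ _)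
    (Continuous.intervalIntegrable (by fun_prop) _ _) fun s ⟨hs0, _⟩ => ?_
  gcongr

lemma monotone_g2 : Monotone g2 := by
  intro a b hab
  rw [g2_eq_integral, g2_eq_integral]
  gcongr 2 * ?_
  refine intervalIntegral.integral_mono_on zero_le_one
    (Continuous.intervalIntegrable (by fun_prop) _ _)
    (Continuous.intervalIntegrable (by fun_prop) _ _) fun s ⟨hs0, hs1⟩ => ?_
  gcongr

lemma exp_eq_one_add_mul_g1 (a : ℝ) : exp a = 1 + a * g1 a := by
  rcases eq_or_ne a 0 with rfl | ha
  · simp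
  · rw [g1, if_neg ha]
    field_simp
    ring

lemma exp_eq_one_add_add_sq_mul_g2 (a : ℝ) : exp a = 1 + a + a ^ 2 / 2 * g2 a := by
  rw [g2_eq_integral]
  linear_combination -sq_mul_integral_one_sub_mul_exp a

lemma exp_le_one_add_mul_g1 {v w : ℝ} (hv : 0 ≤ v) (hvw : v ≤ w) : exp v ≤ 1 + v * g1 w := by
  rw [exp_eq_one_add_mul_g1 v]
  gcongr
  exact monotone_g1 hvw

lemma exp_le_one_add_add_sq_mul_g2 {x c : ℝ} (hxc : x ≤ c) :
    exp x ≤ 1 + x + x ^ 2 / 2 * g2 c := by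
  rw [exp_eq_one_add_add_sq_mul_g2 x]
  gcongr
  exact monotone_g2 hxc

lemma exp_add_le {x v c w : ℝ} (hxc : x ≤ c) (hv : 0 ≤ v) (hvw : v ≤ w) :
    exp (x + v) ≤ 1 + x + g2 c / 2 * x ^ 2 + exp c * g1 w * v := by
  have hv1 := exp_le_one_add_mul_g1 hv hvw
  calc exp (x + v) = exp x + exp x * (exp v - 1) := by rw [exp_add]; ring
    _ ≤ (1 + x + x ^ 2 / 2 * g2 c) + exp c * (v * g1 w) := by
      gcongr
      · exact exp_le_one_add_add_sq_mul_g2 hxc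
      · linarith [one_le_exp hv]
      · linarith
    _ = 1 + x + g2 c / 2 * x ^ 2 + exp c * g1 w * v := by ring

section Probability

variable {Ω E : Type*} [MeasurableSpace Ω] {P : Measure Ω} [IsProbabilityMeasure P]

lemma integral_exp_add_le {X V : Ω → ℝ} {c w : ℝ} (hX : MemLp X 2 P) (hV : Integrable V P)
    (hmean : ∫ ω, X ω ∂P = 0) (hXc : ∀ᵐ ω ∂P, X ω ≤ c) (hV0 : ∀ᵐ ω ∂P, 0 ≤ V ω)
    (hVw : ∀ᵐ ω ∂P, V ω ≤ w) :
    ∫ ω, exp (X ω + V ω) ∂P ≤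
      1 + g2 c / 2 * ∫ ω, X ω ^ 2 ∂P + exp c * g1 w * ∫ ω, V ω ∂P := by
  have hX1 : Integrable X P := hX.integrable one_le_two
  have hX2 : Integrable (fun ω => g2 c / 2 * X ω ^ 2) P := hX.integrable_sq.const_mul _
  have hV' : Integrable (fun ω => exp c * g1 w * V ω) P := hV.const_mul _
  have hexp : Integrable (fun ω => exp (X ω + V ω)) P := by
    refine .of_bound (continuous_exp.comp_aestronglyMeasurable (hX1.1.add hV.1)) (exp (c + w)) ?_
    filter_upwards [hXc, hVw] with ω hx hv
    rw [norm_of_nonneg (exp_pos _).le]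
    exact exp_le_exp.2 (add_le_add hx hv)
  calc ∫ ω, exp (X ω + V ω) ∂P
      ≤ ∫ ω, (1 + X ω + g2 c / 2 * X ω ^ 2 + exp c * g1 w * V ω) ∂P := by
        refine integral_mono_ae hexp (by fun_prop) ?_
        filter_upwards [hXc, hV0, hVw] with ω hx hv0 hvw
        exact exp_add_le hx hv0 hvw
    _ = 1 + g2 c / 2 * ∫ ω, X ω ^ 2 ∂P + exp c * g1 w * ∫ ω, V ω ∂P := by
        rw [integral_add (by fun_prop) hV', integral_add (by fun_prop) hX2,
          integral_add (integrable_const 1) hX1,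
          integral_const, integral_const_mul, integral_const_mul, hmean]
        simp

lemma ae_norm_sub_integral_le [NormedAddCommGroup E] [NormedSpace ℝ E] {Y : Ω → E} {R : ℝ}
    (hY : ∀ᵐ ω ∂P, ‖Y ω‖ ≤ R) : ∀ᵐ ω ∂P, ‖Y ω - ∫ ω', Y ω' ∂P‖ ≤ 2 * R := by
  have hmean : ‖∫ ω, Y ω ∂P‖ ≤ R := by
    simpa using norm_integral_le_of_norm_le_const hY
  filter_upwards [hY] with ω hω
  linarith [norm_sub_le (Y ω) (∫ ω', Y ω' ∂P)]

lemma integral_inner_sub_integral [NormedAddCommGroup E] [InnerProductSpace ℝ E] [CompleteSpace E]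
    {Y : Ω → E} (hY : Integrable Y P) (θ : E) : ∫ ω, ⟪θ, Y ω - ∫ ω', Y ω' ∂P⟫ ∂P = 0 := by
  have hZ : Integrable (fun ω => Y ω - ∫ ω', Y ω' ∂P) P := hY.sub (integrable_const _)
  rw [integral_inner hZ, integral_sub hY (integrable_const _)]
  simp

end Probability

theorem exp_moment_bound {Ω : Type*} [MeasureSpace Ω]
    [IsProbabilityMeasure (ℙ : Measure Ω)] {d : ℕ}
    (Y : Ω → EuclideanSpace ℝ (Fin d)) (hYmeas : Measurable Y)
    (lam μ β : ℝ) (hlam : 0 < lam) (hμ : 0 < μ) (hβ : 0 < β)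
    (hbound : ∀ᵐ ω ∂(ℙ : Measure Ω), ‖Y ω‖ ≤ 1 / lam)
    (mt : EuclideanSpace ℝ (Fin d)) (hmt : mt = ∫ ω, Y ω)
    (θ : EuclideanSpace ℝ (Fin d)) (hθ : ‖θ‖ = 1) :
    ∫ ω, Real.exp (μ * lam * ⟪θ, Y ω - mt⟫ + μ ^ 2 * lam ^ 2 / (2 * β) * ‖Y ω - mt‖ ^ 2) ≤
      1 + g2 (2 * μ) * (μ ^ 2 * lam ^ 2 / 2) * (∫ ω, ⟪θ, Y ω - mt⟫ ^ 2) +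
        Real.exp (2 * μ) * g1 (2 * μ ^ 2 / β) * (μ ^ 2 * lam ^ 2 / (2 * β)) *
          (∫ ω, ‖Y ω - mt‖ ^ 2) := by
  subst hmt
  have hY : Integrable Y := .of_bound hYmeas.aestronglyMeasurable _ hbound
  have hX : ∀ᵐ ω, |μ * lam * ⟪θ, Y ω - ∫ ω', Y ω'⟫| ≤ 2 * μ := by
    filter_upwards [ae_norm_sub_integral_le hbound] with ω hω
    have hinner : |⟪θ, Y ω - ∫ ω', Y ω'⟫| ≤ ‖Y ω - ∫ ω', Y ω'‖ := by
      simpa [hθ] using abs_real_inner_le_norm θ (Y ω - ∫ ω', Y ω')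
    rw [abs_mul, abs_of_pos (by positivity)]
    calc μ * lam * |⟪θ, Y ω - ∫ ω', Y ω'⟫| ≤ μ * lam * (2 * (1 / lam)) := by
          gcongr; exact hinner.trans hω
      _ = 2 * μ := by field_simp
  have hV : ∀ᵐ ω, μ ^ 2 * lam ^ 2 / (2 * β) * ‖Y ω - ∫ ω', Y ω'‖ ^ 2 ≤ 2 * μ ^ 2 / β := by
    filter_upwards [ae_norm_sub_integral_le hbound] with ω hω
    calc μ ^ 2 * lam ^ 2 / (2 * β) * ‖Y ω - ∫ ω', Y ω'‖ ^ 2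
        ≤ μ ^ 2 * lam ^ 2 / (2 * β) * (2 * (1 / lam)) ^ 2 := by gcongr
      _ = 2 * μ ^ 2 / β := by field_simp
  have hXmem : MemLp (fun ω => μ * lam * ⟪θ, Y ω - ∫ ω', Y ω'⟫) 2 :=
    .of_bound (by fun_prop) _ hX
  have hVint : Integrable (fun ω => μ ^ 2 * lam ^ 2 / (2 * β) * ‖Y ω - ∫ ω', Y ω'‖ ^ 2) :=
    .of_bound (by fun_prop) _ (hV.mono fun _ h => by rwa [Real.norm_of_nonneg (by positivity)])
  refine (integral_exp_add_le hXmem hVint ?_ (hX.mono fun _ h => (le_abs_self _).trans h)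
    (ae_of_all _ fun _ => by positivity) hV).trans_eq ?_
  · rw [integral_const_mul, integral_inner_sub_integral hY, mul_zero]
  · simp only [mul_pow, integral_const_mul]
    ring
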